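/- For any positive integer m, the chromatic number of K[C5](m,m,m,m,m) equals ceil(5m/2). -/

import Mathlib

open SimpleGraph Finset

/-- `G` contains an induced copy of `H`. -/
def HasInducedCopy {V W : Type*} (G : SimpleGraph V) (H : SimpleGraph W) : Prop :=
  ∃ f : W ↪ V, ∀ a b, G.Adj (f a) (f b) ↔ H.Adj a b

/-- The cycle on `ZMod n` (for `n ≥ 3`). -/
def cyc (n : ℕ) : SimpleGraph (ZMod n) where
  Adj i j := i ≠ j ∧ (i = j + 1 ∨ j = i + 1)
  symm := ⟨fun i j h => ⟨h.1.symm, h.2.symm⟩⟩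
  loopless := ⟨fun i h => h.1 rfl⟩

/-- Kite: diamond (K4 minus an edge) plus a pendant vertex adjacent to a degree-3 vertex. -/
def kite : SimpleGraph (Fin 5) :=
  SimpleGraph.fromEdgeSet {s(0,1), s(0,2), s(1,2), s(1,3), s(2,3), s(1,4)}

/-- Bull: triangle with two pendant edges at distinct vertices. -/
def bull : SimpleGraph (Fin 5) :=
  SimpleGraph.fromEdgeSet {s(0,1), s(0,2), s(1,2), s(0,3), s(1,4)}

/-- Independent expansion of the cycle `C_n`. -/
def indExp (n : ℕ) (m : ZMod n → ℕ) : SimpleGraph (Σ i : ZMod n, Fin (m i)) where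
  Adj x y := x.1 ≠ y.1 ∧ (x.1 = y.1 + 1 ∨ y.1 = x.1 + 1)
  symm := ⟨fun x y h => ⟨h.1.symm, h.2.symm⟩⟩
  loopless := ⟨fun x h => h.1 rfl⟩

/-- Complete expansion of the cycle `C_n`. -/
def compExp (n : ℕ) (m : ZMod n → ℕ) : SimpleGraph (Σ i : ZMod n, Fin (m i)) where
  Adj x y := (x.1 = y.1 ∧ x ≠ y) ∨ (x.1 ≠ y.1 ∧ (x.1 = y.1 + 1 ∨ y.1 = x.1 + 1))
  symm := by
    refine ⟨?_⟩
    rintro x y (⟨h, hne⟩ | ⟨h, h2⟩)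
    · exact Or.inl ⟨h.symm, hne.symm⟩
    · exact Or.inr ⟨h.symm, h2.symm⟩
  loopless := ⟨by rintro x (⟨_, hne⟩ | ⟨h, _⟩); exacts [hne rfl, h rfl]⟩

/-- Distance from a vertex to a set of vertices. -/
noncomputable def distToSet {V : Type*} (G : SimpleGraph V) (S : Set V) (x : V) : ℕ :=
  sInf ((fun y => G.dist x y) '' S)

/-!
Every colour class is independent, and an independent set of `K[C5](m,…,m)` takes at most one
vertex from each of at most two non-adjacent blobs, so `5m ≤ 2χ`. Conversely, number the
vertices blob by blob as positions `0, …, 5m-1` and colour position `p` by `p mod ⌈5m/2⌉`.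
Two distinct positions with the same colour differ by exactly `⌈5m/2⌉ ∈ [2m, 3m]`, so they lie
in blobs two or three apart, which are non-adjacent in `C5`.
-/

namespace SimpleGraph

variable {V : Type*} {G : SimpleGraph V}

theorem Colorable.card_le_indepNum_mul [Fintype V] {n : ℕ} (hG : G.Colorable n) :
    Fintype.card V ≤ G.indepNum * n := by
  classical
  obtain ⟨C⟩ := hG
  have hclass : ∀ c, G.IsIndepSet (({v | C v = c} : Finset V) : Set V) := by
    intro c v hv w hw _ hadj
    simp only [coe_filter, mem_univ, true_and, Set.mem_ofPred_eq] at hv hw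
    exact C.valid hadj (hv.trans hw.symm)
  calc Fintype.card V = ∑ c : Fin n, #{v | C v = c} :=
        card_eq_sum_card_fiberwise fun v _ => mem_univ (C v)
    _ ≤ ∑ _c : Fin n, G.indepNum := sum_le_sum fun c _ => (hclass c).card_le_indepNum
    _ = G.indepNum * n := by simp [mul_comm]

end SimpleGraph

section CompleteExpansion

variable {n : ℕ} {m : ZMod n → ℕ}

theorem compExp_adj_iff {x y : Σ i : ZMod n, Fin (m i)} :
    (compExp n m).Adj x y ↔ (x.1 = y.1 ∧ x ≠ y) ∨ (cyc n).Adj x.1 y.1 :=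
  Iff.rfl

theorem compExp_isIndepSet_injOn_fst {s : Set (Σ i : ZMod n, Fin (m i))}
    (hs : (compExp n m).IsIndepSet s) : Set.InjOn Sigma.fst s :=
  fun _ hx _ hy h => by_contra fun hne => hs hx hy hne (compExp_adj_iff.mpr (Or.inl ⟨h, hne⟩))

theorem compExp_isIndepSet_image_fst {s : Set (Σ i : ZMod n, Fin (m i))}
    (hs : (compExp n m).IsIndepSet s) : (cyc n).IsIndepSet (Sigma.fst '' s) := by
  rintro _ ⟨x, hx, rfl⟩ _ ⟨y, hy, rfl⟩ hne hadj
  exact hs hx hy (fun h => hne (h ▸ rfl)) (compExp_adj_iff.mpr (Or.inr hadj))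

end CompleteExpansion

theorem cyc_five_isIndepSet_card_le {t : Finset (ZMod 5)} (ht : (cyc 5).IsIndepSet t) :
    #t ≤ 2 := by
  have three_adj : ∀ a b c : ZMod 5, a ≠ b → a ≠ c → b ≠ c →
      (cyc 5).Adj a b ∨ (cyc 5).Adj a c ∨ (cyc 5).Adj b c := by
    simp only [cyc]; decide
  by_contra! h
  obtain ⟨a, ha, b, hb, c, hc, hab, hac, hbc⟩ := two_lt_card.mp h
  rcases three_adj a b c hab hac hbc with h | h | h
  exacts [ht ha hb hab h, ht ha hc hac h, ht hb hc hbc h]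

theorem compExp_five_indepNum_le (m : ZMod 5 → ℕ) : (compExp 5 m).indepNum ≤ 2 := by
  classical
  obtain ⟨s, hs⟩ := exists_isNIndepSet_indepNum (G := compExp 5 m)
  rw [← hs.card_eq, ← card_image_of_injOn (compExp_isIndepSet_injOn_fst hs.isIndepSet)]
  exact cyc_five_isIndepSet_card_le (by simpa using compExp_isIndepSet_image_fst hs.isIndepSet)

theorem Nat.eq_and_eq_of_mul_add_eq {m a b j j' : ℕ} (hj : j < m) (hj' : j' < m)
    (h : a * m + j = b * m + j') : a = b ∧ j = j' := by
  have hm : 0 < m := by omega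
  obtain ⟨ha, hja⟩ := (Nat.div_mod_unique (a := a * m + j) (d := a) hm).mpr ⟨by ring, hj⟩
  obtain ⟨hb, hjb⟩ := (Nat.div_mod_unique (a := b * m + j') (d := b) hm).mpr ⟨by ring, hj'⟩
  rw [h] at ha hja
  exact ⟨ha.symm.trans hb, hja.symm.trans hjb⟩

theorem Nat.ModEq.eq_add_of_lt_of_lt_add_two_mul {N p q : ℕ} (h : p ≡ q [MOD N])
    (hpq : p < q) (hq : q < p + 2 * N) : q = p + N := by
  have := Nat.eq_of_dvd_of_lt_two_mul (by omega) ((Nat.modEq_iff_dvd' hpq.le).mp h) (by omega)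
  omega

theorem blob_gap_of_modEq {m a b j j' : ℕ} (hb : b < 5) (hj : j < m) (hj' : j' < m)
    (hlt : a * m + j < b * m + j') (h : a * m + j ≡ b * m + j' [MOD (5 * m + 1) / 2]) :
    a + 2 ≤ b ∧ b ≤ a + 3 := by
  have hq : b * m + j' < 5 * m := by nlinarith
  have hgap := h.eq_add_of_lt_of_lt_add_two_mul hlt (by omega)
  constructor
  · by_contra! hab
    have : b * m ≤ a * m + m := by nlinarith
    omega
  · by_contra! hab
    have : a * m + 4 * m ≤ b * m := by nlinarith
    omega

theorem cyc_five_not_adj_of_gap : ∀ a b : ZMod 5, a.val + 2 ≤ b.val ∧ b.val ≤ a.val + 3 →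
    a ≠ b ∧ ¬(cyc 5).Adj a b := by
  simp only [cyc]; decide

theorem compExp_five_colorable (m : ℕ) :
    (compExp 5 fun _ => m).Colorable ((5 * m + 1) / 2) := by
  let pos : (Σ _ : ZMod 5, Fin m) → ℕ := fun x => x.1.val * m + x.2
  have pos_injective : pos.Injective := by
    intro x y h
    obtain ⟨h1, h2⟩ := Nat.eq_and_eq_of_mul_add_eq x.2.isLt y.2.isLt h
    exact Sigma.ext (ZMod.val_injective 5 h1) (heq_of_eq (Fin.ext h2))
  refine ⟨Coloring.mk
    (fun x => ⟨pos x % ((5 * m + 1) / 2), Nat.mod_lt _ (by have := x.2.pos; omega)⟩) ?_⟩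
  intro x y hxy hc
  wlog hlt : pos x < pos y generalizing x y
  · rcases (not_lt.mp hlt).lt_or_eq with h | h
    · exact this hxy.symm hc.symm h
    · exact hxy.ne (pos_injective h.symm)
  obtain ⟨hne, hnadj⟩ := cyc_five_not_adj_of_gap x.1 y.1
    (blob_gap_of_modEq (ZMod.val_lt y.1) x.2.isLt y.2.isLt hlt (congrArg Fin.val hc))
  rcases compExp_adj_iff.mp hxy with ⟨h, -⟩ | h
  exacts [hne h, hnadj h]

theorem stmt_13_general (m : ℕ) :
    (compExp 5 fun _ => m).chromaticNumber = (((5 * m + 1) / 2 : ℕ) : ℕ∞) := by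
  refine le_antisymm (compExp_five_colorable m).chromaticNumber_le ?_
  refine le_chromaticNumber_iff_colorable.mpr fun k hk => ?_
  have hcard : Fintype.card (Σ _ : ZMod 5, Fin m) = 5 * m := by simp
  have hindep := compExp_five_indepNum_le fun _ => m
  have hvertices : 5 * m ≤ 2 * k :=
    hcard ▸ hk.card_le_indepNum_mul.trans (Nat.mul_le_mul_right k hindep)
  exact_mod_cast (by omega : (5 * m + 1) / 2 ≤ k)

theorem stmt_13 (m : ℕ) (hm : 0 < m) :
    (compExp 5 fun _ => m).chromaticNumber = (((5 * m + 1) / 2 : ℕ) : ℕ∞) :=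
  stmt_13_general m
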